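/- arXiv:1806.06751 — 7 statements merged into one kernel-verified Lean document; each statement's English description precedes it below -/
import Mathlib

section
/- For every natural number p and every integer n ≥ 1, the trace of the n-th power of the matrix A_p equals 2^p, i.e. Tr[A_p^n] = 2^p. -/
open Matrix

/-- Index type for the recursively defined block matrices `A p`,
of cardinality `2 ^ p`. -/
def IdxA : ℕ → Type
  | 0 => Fin 1
  | p + 1 => IdxA p ⊕ IdxA p

instance instFintypeIdxA : ∀ p, Fintype (IdxA p)
  | 0 => inferInstanceAs (Fintype (Fin 1))
  | p + 1 => letI := instFintypeIdxA p; inferInstanceAs (Fintype (IdxA p ⊕ IdxA p))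

instance instDecidableEqIdxA : ∀ p, DecidableEq (IdxA p)
  | 0 => inferInstanceAs (DecidableEq (Fin 1))
  | p + 1 => letI := instDecidableEqIdxA p; inferInstanceAs (DecidableEq (IdxA p ⊕ IdxA p))

/-- `A 0` is the 1×1 matrix with single entry 1, and
`A (p+1) = [[A p, (A p)ᵀ], [0, A p]]` as a 2×2 block matrix. -/
def A : (p : ℕ) → Matrix (IdxA p) (IdxA p) ℤ
  | 0 => Matrix.of fun _ _ => (1 : ℤ)
  | p + 1 => Matrix.fromBlocks (A p) (A p)ᵀ 0 (A p)

/-! The powers of a block upper-triangular matrix are block upper-triangular with the powers of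
the diagonal blocks on the diagonal, and the trace only sees the diagonal blocks. Since
`A (p + 1)` has two copies of `A p` on its diagonal, the trace of each of its powers is twice
that of `A p`, and `A 0 = 1`. -/

namespace Matrix

variable {R m n : Type*} [Fintype m] [Fintype n]

theorem trace_fromBlocks [AddCommMonoid R] (B : Matrix m m R) (C : Matrix m n R)
    (C' : Matrix n m R) (D : Matrix n n R) :
    (fromBlocks B C C' D).trace = B.trace + D.trace := by
  simp only [trace, diag, fromBlocks_apply₁₁, fromBlocks_apply₂₂, Fintype.sum_sum_type]

variable [DecidableEq m] [DecidableEq n] [Semiring R]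

theorem exists_fromBlocks_zero₂₁_pow (B : Matrix m m R) (C : Matrix m n R) (D : Matrix n n R)
    (k : ℕ) : ∃ E, fromBlocks B C 0 D ^ k = fromBlocks (B ^ k) E 0 (D ^ k) := by
  induction k with
  | zero => exact ⟨0, by rw [pow_zero, pow_zero, pow_zero, fromBlocks_one]⟩
  | succ k ih =>
    obtain ⟨E, hE⟩ := ih
    refine ⟨B ^ k * C + E * D, ?_⟩
    rw [pow_succ, pow_succ, pow_succ, hE, fromBlocks_multiply]
    simp

theorem trace_fromBlocks_zero₂₁_pow (B : Matrix m m R) (C : Matrix m n R) (D : Matrix n n R)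
    (k : ℕ) : (fromBlocks B C 0 D ^ k).trace = (B ^ k).trace + (D ^ k).trace := by
  obtain ⟨E, hE⟩ := exists_fromBlocks_zero₂₁_pow B C D k
  rw [hE, trace_fromBlocks]

end Matrix

theorem A_zero : A 0 = 1 := by
  ext i j
  fin_cases i; fin_cases j
  rfl

theorem trace_pow_A_eq_two_pow_general (p n : ℕ) :
    Matrix.trace ((A p) ^ n) = 2 ^ p := by
  induction p with
  | zero =>
    rw [A_zero, one_pow, trace_one]
    rfl
  | succ p ih =>
    calc ((A (p + 1)) ^ n).trace = (A p ^ n).trace + (A p ^ n).trace :=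
          trace_fromBlocks_zero₂₁_pow (A p) (A p)ᵀ (A p) n
      _ = 2 ^ (p + 1) := by rw [ih, pow_succ, mul_two]

theorem trace_pow_A_eq_two_pow (p n : ℕ) (hn : 1 ≤ n) :
    Matrix.trace ((A p) ^ n) = 2 ^ p :=
  trace_pow_A_eq_two_pow_general p n
end

section
/- For every natural number p and every integer n ≥ 1, Tr[A_p^n · A_p^T] = (n+2)^p. -/
open Matrix

/-
By induction on `n`, `A (p+1) ^ n = [[A p ^ n, D], [0, A p ^ n]]` with
`D = ∑_{i<n} A p ^ i (A p)ᵀ A p ^ (n-1-i)`, and by cyclicity of the trace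
`tr (D A p) = n tr (A p ^ n (A p)ᵀ)`. Hence
`tr (A (p+1) ^ n A (p+1)ᵀ) = 2 tr (A p ^ n (A p)ᵀ) + tr (D A p) = (n + 2) tr (A p ^ n (A p)ᵀ)`.
-/

namespace Matrix

theorem trace_fromBlocks_s1 {ι κ R : Type*} [Fintype ι] [Fintype κ] [AddCommMonoid R]
    (a : Matrix ι ι R) (b : Matrix ι κ R) (c : Matrix κ ι R) (d : Matrix κ κ R) :
    trace (fromBlocks a b c d) = trace a + trace d := by
  simp [trace, Fintype.sum_sum_type]

variable {ι R : Type*} [Fintype ι] [DecidableEq ι]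

/-- The derivative of `X ↦ X ^ n` at `M` in the direction `N`. -/
def derivPow [Semiring R] (M N : Matrix ι ι R) (n : ℕ) : Matrix ι ι R :=
  ∑ i ∈ Finset.range n, M ^ i * N * M ^ (n - 1 - i)

theorem derivPow_zero [Semiring R] (M N : Matrix ι ι R) : derivPow M N 0 = 0 := rfl

theorem derivPow_succ [Semiring R] (M N : Matrix ι ι R) (n : ℕ) :
    derivPow M N (n + 1) = M * derivPow M N n + N * M ^ n := by
  rw [derivPow, Finset.sum_range_succ', derivPow, Finset.mul_sum]
  congr 1
  · refine Finset.sum_congr rfl fun i _ => ?_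
    rw [pow_succ', Nat.add_sub_cancel, Nat.sub_sub, Nat.add_comm 1 i, mul_assoc, mul_assoc,
      mul_assoc]
  · simp

theorem fromBlocks_pow [Semiring R] (M N : Matrix ι ι R) (n : ℕ) :
    fromBlocks M N 0 M ^ n = fromBlocks (M ^ n) (derivPow M N n) 0 (M ^ n) := by
  induction n with
  | zero => simp [derivPow_zero, fromBlocks_one]
  | succ n ih =>
    rw [pow_succ', ih, fromBlocks_multiply, derivPow_succ]
    simp [pow_succ']

theorem trace_derivPow_mul [CommSemiring R] (M N : Matrix ι ι R) (n : ℕ) :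
    trace (derivPow M N n * M) = n * trace (M ^ n * N) := by
  have cyclic : ∀ i ∈ Finset.range n,
      trace (M ^ i * N * M ^ (n - 1 - i) * M) = trace (M ^ n * N) := fun i hi => by
    rw [mul_assoc, ← pow_succ, trace_mul_comm, ← mul_assoc, ← pow_add,
      show n - 1 - i + 1 + i = n by have := Finset.mem_range.1 hi; omega]
  rw [derivPow, Finset.sum_mul, trace_sum, Finset.sum_congr rfl cyclic, Finset.sum_const,
    Finset.card_range, nsmul_eq_mul]

theorem trace_fromBlocks_pow_mul_transpose [CommSemiring R] (M : Matrix ι ι R) (n : ℕ) :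
    trace (fromBlocks M Mᵀ 0 M ^ n * (fromBlocks M Mᵀ 0 M)ᵀ) = (n + 2) * trace (M ^ n * Mᵀ) := by
  rw [fromBlocks_pow, fromBlocks_transpose, fromBlocks_multiply, trace_fromBlocks_s1]
  simp only [transpose_zero, transpose_transpose, Matrix.mul_zero, trace_add,
    zero_add, trace_derivPow_mul]
  ring

end Matrix

theorem trace_pow_A_mul_transpose_general (p n : ℕ) :
    Matrix.trace ((A p) ^ n * (A p)ᵀ) = ((n : ℤ) + 2) ^ p := by
  induction p with
  | zero => simp only [A_zero, one_pow, one_mul, transpose_one, trace_one, pow_zero]; rfl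
  | succ p ih =>
    rw [pow_succ, ← ih, mul_comm]
    exact trace_fromBlocks_pow_mul_transpose (A p) n

theorem trace_pow_A_mul_transpose (p n : ℕ) (hn : 1 ≤ n) :
    Matrix.trace ((A p) ^ n * (A p)ᵀ) = ((n : ℤ) + 2) ^ p :=
  trace_pow_A_mul_transpose_general p n
end

section
/- For every natural number p, Tr[B_p^2] = 2·(2^p + 3^p), where B_p = A_p + A_p^T. -/
open Matrix

/-- The symmetrized transfer matrix `B p = A p + (A p)ᵀ`. -/
def B (p : ℕ) : Matrix (IdxA p) (IdxA p) ℤ := A p + (A p)ᵀ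

/-!
Expanding the square and using `Tr (Xᵀ Yᵀ) = Tr (X Y)` and `Tr (X Y) = Tr (Y X)` gives
`Tr B_p² = 2 (Tr A_p² + Tr A_p A_pᵀ)`. Only the diagonal blocks of a block product contribute to
its trace: those of `A_{p+1}²` are `A_p²` twice, and those of `A_{p+1} A_{p+1}ᵀ` are
`A_p A_pᵀ + A_pᵀ A_p` and `A_p A_pᵀ`, so the two traces grow by factors `2` and `3`.
-/

namespace Matrix

variable {R m n : Type*} [Fintype m] [Fintype n]

theorem trace_fromBlocks_s6 [AddCommMonoid R] (M : Matrix m m R) (N : Matrix m n R)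
    (P : Matrix n m R) (Q : Matrix n n R) :
    trace (fromBlocks M N P Q) = trace M + trace Q := by
  simp only [trace, diag, Fintype.sum_sum_type, fromBlocks_apply₁₁, fromBlocks_apply₂₂]

theorem trace_add_transpose_sq [CommSemiring R] [DecidableEq n] (M : Matrix n n R) :
    trace ((M + Mᵀ) ^ 2) = 2 * (trace (M * M) + trace (M * Mᵀ)) := by
  have h_tt : trace (Mᵀ * Mᵀ) = trace (M * M) := trace_transpose_mul M M
  have h_tm : trace (Mᵀ * M) = trace (M * Mᵀ) := trace_mul_comm Mᵀ M
  rw [sq, add_mul, mul_add, mul_add, trace_add, trace_add, trace_add, h_tt, h_tm]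
  ring

end Matrix

theorem trace_A_mul_self (p : ℕ) : trace (A p * A p) = 2 ^ p := by
  induction p with
  | zero => rfl
  | succ p ih =>
    show trace (fromBlocks (A p) (A p)ᵀ 0 (A p) * fromBlocks (A p) (A p)ᵀ 0 (A p)) = _
    rw [fromBlocks_multiply, trace_fromBlocks_s6, Matrix.mul_zero, Matrix.zero_mul, add_zero,
      zero_add, ih, pow_succ]
    ring

theorem trace_A_mul_transpose (p : ℕ) : trace (A p * (A p)ᵀ) = 3 ^ p := by
  induction p with
  | zero => rfl
  | succ p ih =>
    show trace (fromBlocks (A p) (A p)ᵀ 0 (A p) * (fromBlocks (A p) (A p)ᵀ 0 (A p))ᵀ) = _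
    rw [fromBlocks_transpose, fromBlocks_multiply, trace_fromBlocks_s6, transpose_zero,
      transpose_transpose, Matrix.mul_zero, zero_add, trace_add, trace_mul_comm (A p)ᵀ,
      ih, pow_succ]
    ring

theorem trace_B_sq (p : ℕ) :
    Matrix.trace ((B p) ^ 2) = 2 * (2 ^ p + 3 ^ p) := by
  rw [B, trace_add_transpose_sq, trace_A_mul_self, trace_A_mul_transpose]
end

section
/- For every natural number p, Tr[B_p^3] = 2^{p+1} + 6·4^p, where B_p = A_p + A_p^T. -/
open Matrix

/-!
Expanding the cube of `M + Mᵀ` gives eight words in `M` and `Mᵀ`; by cyclicity of the trace and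
`tr Xᵀ = tr X` each has the trace of `M ^ 3` (two of them) or of `M ^ 2 * Mᵀ` (the other six).
For the block upper-triangular `A (p + 1)`, the diagonal blocks of its cube are `A p ^ 3`,
so `tr (A p ^ 3)` doubles with `p`, while `tr (A p ^ 2 * (A p)ᵀ)` quadruples: besides two
diagonal copies of itself it picks up the off-diagonal words `A Aᵀ A` and `Aᵀ A A`, rotations
of `A A Aᵀ`.
-/

theorem Matrix.trace_fromBlocks_s8 {m n R : Type*} [Fintype m] [Fintype n] [AddCommMonoid R]
    (A : Matrix m m R) (B : Matrix m n R) (C : Matrix n m R) (D : Matrix n n R) :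
    trace (fromBlocks A B C D) = trace A + trace D := by
  simp [trace, Fintype.sum_sum_type]

section TraceCube

variable {n R : Type*} [Fintype n] [DecidableEq n] [CommRing R]

theorem Matrix.trace_add_transpose_pow_three (M : Matrix n n R) :
    trace ((M + Mᵀ) ^ 3) = 2 * trace (M ^ 3) + 6 * trace (M ^ 2 * Mᵀ) := by
  have h_expand : (M + Mᵀ) ^ 3 =
      M * M * M + M * M * Mᵀ + M * Mᵀ * M + Mᵀ * M * M +
      M * Mᵀ * Mᵀ + Mᵀ * M * Mᵀ + Mᵀ * Mᵀ * M + Mᵀ * Mᵀ * Mᵀ := by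
    noncomm_ring
  have h_rot₁ : trace (M * Mᵀ * M) = trace (M * M * Mᵀ) := trace_mul_cycle _ _ _
  have h_rot₂ : trace (Mᵀ * M * M) = trace (M * M * Mᵀ) := (trace_mul_cycle _ _ _).symm
  have h_flip (X Y Z : Matrix n n R) : trace (Xᵀ * Yᵀ * Zᵀ) = trace (Z * Y * X) := by
    rw [← transpose_mul, ← transpose_mul, trace_transpose, Matrix.mul_assoc]
  have h_MTT : trace (M * Mᵀ * Mᵀ) = trace (M * M * Mᵀ) := by
    simpa using h_flip Mᵀ M M
  have h_TMT : trace (Mᵀ * M * Mᵀ) = trace (M * M * Mᵀ) := by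
    simpa [h_rot₁] using h_flip M Mᵀ M
  have h_TTM : trace (Mᵀ * Mᵀ * M) = trace (M * M * Mᵀ) := by
    simpa [h_rot₂] using h_flip M M Mᵀ
  rw [h_expand]
  simp only [trace_add, h_rot₁, h_rot₂, h_MTT, h_TMT, h_TTM, h_flip, pow_three', pow_two]
  ring

theorem Matrix.trace_fromBlocks_self_transpose_pow_three (M : Matrix n n R) :
    trace (fromBlocks M Mᵀ 0 M ^ 3) = 2 * trace (M ^ 3) := by
  rw [pow_three', fromBlocks_multiply, fromBlocks_multiply, trace_fromBlocks_s8]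
  simp only [Matrix.mul_zero, Matrix.zero_mul, add_zero, zero_add]
  rw [← pow_three']
  ring

theorem Matrix.trace_fromBlocks_self_transpose_sq_mul_transpose (M : Matrix n n R) :
    trace (fromBlocks M Mᵀ 0 M ^ 2 * (fromBlocks M Mᵀ 0 M)ᵀ) = 4 * trace (M ^ 2 * Mᵀ) := by
  have h_rot₁ : trace (M * Mᵀ * M) = trace (M * M * Mᵀ) := trace_mul_cycle _ _ _
  have h_rot₂ : trace (Mᵀ * M * M) = trace (M * M * Mᵀ) := (trace_mul_cycle _ _ _).symm
  rw [pow_two, pow_two, fromBlocks_transpose, fromBlocks_multiply, fromBlocks_multiply,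
    trace_fromBlocks_s8]
  simp only [Matrix.mul_zero, Matrix.zero_mul, add_zero, zero_add, transpose_zero,
    transpose_transpose, Matrix.add_mul, trace_add, h_rot₁, h_rot₂]
  ring

end TraceCube

theorem trace_A_pow_three (p : ℕ) : trace (A p ^ 3) = 2 ^ p := by
  induction p with
  | zero => decide
  | succ p ih =>
    rw [pow_succ 2 p, ← ih, mul_comm]
    exact trace_fromBlocks_self_transpose_pow_three (A p)

theorem trace_A_sq_mul_transpose (p : ℕ) : trace (A p ^ 2 * (A p)ᵀ) = 4 ^ p := by
  induction p with
  | zero => decide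
  | succ p ih =>
    rw [pow_succ 4 p, ← ih, mul_comm]
    exact trace_fromBlocks_self_transpose_sq_mul_transpose (A p)

theorem trace_B_cube (p : ℕ) :
    Matrix.trace ((B p) ^ 3) = 2 ^ (p + 1) + 6 * 4 ^ p := by
  rw [B, trace_add_transpose_pow_three, trace_A_pow_three, trace_A_sq_mul_transpose, pow_succ]
  ring
end

section
/- Let k ≥ 2 be an integer and let l₁, l₂, l₃ be nonzero elements of ZMod k with l₁+l₂+l₃ = 0. Define g : ZMod k × ZMod k → ℤ by g(a,l) = k-2 if a + l = 0 and g(a,l) = -1 otherwise. Then the sum of g(a₁,l₁)·g(a₂,l₂)·g(a₃,l₃) over all quadruples (a₁,a₂,a₃,a₄) of nonzero elements of ZMod k with a₁+a₂+a₃+a₄ = 0 equals (k-2) - 2(k-2)^2 - (k-2)^3 + 2. In particular this sum is zero when k = 3 and nonzero for every k > 3. -/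
/-!
Let `u_l(a)` be `g(a, l)` for `a ≠ 0` and `0` for `a = 0`. For `l ≠ 0` it equals
`(k - 1)[a = -l] + [a = 0] - 1`, so it sums to zero and its convolution with any function is
explicit. Eliminating `a₄` leaves the sum of `u₁ u₂ u₃` over triples with `a₁ + a₂ + a₃ ≠ 0`.
The sum over all triples factors as `(∑ u₁)(∑ u₂)(∑ u₃) = 0`, and the sum over triples with
`a₁ + a₂ + a₃ = 0` is a double convolution, which evaluates to `k (k - 1) (k - 3)`.
-/

open Finset

namespace VertexModel

variable {G : Type*} [AddCommGroup G] [Fintype G] [DecidableEq G]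

def compatWeight (l a : G) : ℤ := if a + l = 0 then Fintype.card G - 2 else -1

def nonzeroWeight (l a : G) : ℤ := if a = 0 then 0 else compatWeight l a

def vertexConfigs : Finset (G × G × G × G) :=
  univ.filter fun a => a.1 ≠ 0 ∧ a.2.1 ≠ 0 ∧ a.2.2.1 ≠ 0 ∧ a.2.2.2 ≠ 0 ∧
    a.1 + a.2.1 + a.2.2.1 + a.2.2.2 = 0

section nonzeroWeight

variable {l : G}

theorem nonzeroWeight_zero : nonzeroWeight l 0 = 0 := if_pos rfl

theorem nonzeroWeight_neg_self (hl : l ≠ 0) :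
    nonzeroWeight l (-l) = Fintype.card G - 2 := by
  simp [nonzeroWeight, compatWeight, hl]

theorem nonzeroWeight_of_ne {a : G} (ha : a ≠ 0) (hal : a + l ≠ 0) :
    nonzeroWeight l a = -1 := by
  simp [nonzeroWeight, compatWeight, ha, hal]

theorem nonzeroWeight_eq (hl : l ≠ 0) (a : G) :
    nonzeroWeight l a =
      (Fintype.card G - 1) * (if a = -l then 1 else 0) + (if a = 0 then 1 else 0) - 1 := by
  simp only [nonzeroWeight, compatWeight, ← eq_neg_iff_add_eq_zero]
  split_ifs <;> first | ring1 | (subst_vars; simp_all)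

theorem sum_nonzeroWeight (hl : l ≠ 0) : ∑ a, nonzeroWeight l a = 0 := by
  simp [nonzeroWeight_eq hl, sum_sub_distrib, sum_add_distrib]

theorem sum_mul_nonzeroWeight_sub (hl : l ≠ 0) (f : G → ℤ) (c : G) :
    ∑ x, f x * nonzeroWeight l (c - x) =
      (Fintype.card G - 1) * f (c + l) + f c - ∑ x, f x := by
  have hsub : ∀ x, (c - x = -l ↔ x = c + l) ∧ (c - x = 0 ↔ x = c) := fun x => by grind
  simp only [nonzeroWeight_eq hl, hsub, mul_sub, mul_add, mul_ite, mul_one, mul_zero,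
    sum_sub_distrib, sum_add_distrib, sum_ite_eq', mem_univ, if_true]
  ring

theorem sum_nonzeroWeight_mul_nonzeroWeight_sub {l₁ l₂ : G} (h₁ : l₁ ≠ 0) (h₂ : l₂ ≠ 0)
    (c : G) :
    ∑ x, nonzeroWeight l₁ x * nonzeroWeight l₂ (c - x) =
      (Fintype.card G - 1) * nonzeroWeight l₁ (c + l₂) + nonzeroWeight l₁ c := by
  rw [sum_mul_nonzeroWeight_sub h₂, sum_nonzeroWeight h₁, sub_zero]

end nonzeroWeight

theorem sum_vertexConfigs (F : G → G → G → ℤ) :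
    ∑ a ∈ vertexConfigs, F a.1 a.2.1 a.2.2.1 =
      ∑ x, ∑ y, ∑ z, if x ≠ 0 ∧ y ≠ 0 ∧ z ≠ 0 ∧ x + y + z ≠ 0 then F x y z else 0 := by
  have hw : ∀ x y z w : G, (x ≠ 0 ∧ y ≠ 0 ∧ z ≠ 0 ∧ w ≠ 0 ∧ x + y + z + w = 0) ↔
      (w = -(x + y + z) ∧ (x ≠ 0 ∧ y ≠ 0 ∧ z ≠ 0 ∧ x + y + z ≠ 0)) := by grind
  simp only [vertexConfigs, sum_filter, Fintype.sum_prod_type, hw]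
  simp [ite_and]

theorem sum_vertexConfigs_compatWeight {l₁ l₂ l₃ : G} (h₁ : l₁ ≠ 0) (h₂ : l₂ ≠ 0)
    (h₃ : l₃ ≠ 0) (hl : l₁ + l₂ + l₃ = 0) :
    ∑ a ∈ vertexConfigs,
      compatWeight l₁ a.1 * compatWeight l₂ a.2.1 * compatWeight l₃ a.2.2.1 =
      -(Fintype.card G * (Fintype.card G - 1) * (Fintype.card G - 3)) := by
  have hpt : ∀ x y z : G,
      (if x ≠ 0 ∧ y ≠ 0 ∧ z ≠ 0 ∧ x + y + z ≠ 0 then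
        compatWeight l₁ x * compatWeight l₂ y * compatWeight l₃ z else 0) =
      nonzeroWeight l₁ x * (nonzeroWeight l₂ y *
        (nonzeroWeight l₃ z - if z = -x - y then nonzeroWeight l₃ z else 0)) := by
    intro x y z
    have hz : x + y + z = 0 ↔ z = -x - y := by grind
    simp only [nonzeroWeight, ← hz]
    split_ifs <;> simp_all [mul_assoc]
  have h₃₂ : l₃ + l₂ = -l₁ := by grind
  have h₃₁ : l₃ + l₁ ≠ 0 := by grind
  have h₂₁ : l₂ + l₁ ≠ 0 := by grind
  calc _ = ∑ x, ∑ y, ∑ z, nonzeroWeight l₁ x * (nonzeroWeight l₂ y *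
        (nonzeroWeight l₃ z - if z = -x - y then nonzeroWeight l₃ z else 0)) := by
        rw [sum_vertexConfigs fun x y z =>
          compatWeight l₁ x * compatWeight l₂ y * compatWeight l₃ z]
        simp only [hpt]
    _ = -∑ x, nonzeroWeight l₁ x * ∑ y, nonzeroWeight l₂ y * nonzeroWeight l₃ (-x - y) := by
        simp only [← mul_sum, sum_sub_distrib, sum_ite_eq', mem_univ, if_true,
          sum_nonzeroWeight h₃, zero_sub, mul_neg, sum_neg_distrib]
    _ = -∑ x, nonzeroWeight l₁ x *
          ((Fintype.card G - 1) * nonzeroWeight l₂ (l₃ - x) + nonzeroWeight l₂ (0 - x)) := by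
        simp only [sum_nonzeroWeight_mul_nonzeroWeight_sub h₂ h₃, neg_add_eq_sub, zero_sub]
    _ = -((Fintype.card G - 1) * ((Fintype.card G - 1) * nonzeroWeight l₁ (l₃ + l₂) +
          nonzeroWeight l₁ l₃) + ((Fintype.card G - 1) * nonzeroWeight l₁ (0 + l₂) +
          nonzeroWeight l₁ 0)) := by
        simp only [mul_add, sum_add_distrib, mul_left_comm _ (Fintype.card G - 1 : ℤ),
          ← mul_sum, sum_nonzeroWeight_mul_nonzeroWeight_sub h₁ h₂]
    _ = _ := by
        rw [h₃₂, nonzeroWeight_neg_self h₁, nonzeroWeight_of_ne h₃ h₃₁, zero_add,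
          nonzeroWeight_of_ne h₂ h₂₁, nonzeroWeight_zero]
        ring

end VertexModel

/-- Contribution of a vertex with three incident edges in a non-Eulerian graph:
with `g a l = k - 2` if `a + l = 0` and `-1` otherwise, the sum of
`g a₁ l₁ * g a₂ l₂ * g a₃ l₃` over all quadruples of nonzero elements of
`ZMod k` summing to zero equals `(k-2) - 2(k-2)² - (k-2)³ + 2`, which vanishes
for `k = 3` and is nonzero for `k > 3`. -/
theorem nonEulerian_vertex_contribution (k : ℕ) (hk : 2 ≤ k)
    (l₁ l₂ l₃ : ZMod k) (h₁ : l₁ ≠ 0) (h₂ : l₂ ≠ 0) (h₃ : l₃ ≠ 0)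
    (hl : l₁ + l₂ + l₃ = 0) :
    letI : NeZero k := ⟨by omega⟩
    (∑ a ∈ Finset.univ.filter
        (fun a : ZMod k × ZMod k × ZMod k × ZMod k =>
          a.1 ≠ 0 ∧ a.2.1 ≠ 0 ∧ a.2.2.1 ≠ 0 ∧ a.2.2.2 ≠ 0 ∧
          a.1 + a.2.1 + a.2.2.1 + a.2.2.2 = 0),
        (if a.1 + l₁ = 0 then (k : ℤ) - 2 else -1) *
        (if a.2.1 + l₂ = 0 then (k : ℤ) - 2 else -1) *
        (if a.2.2.1 + l₃ = 0 then (k : ℤ) - 2 else -1))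
      = ((k : ℤ) - 2) - 2 * ((k : ℤ) - 2) ^ 2 - ((k : ℤ) - 2) ^ 3 + 2 ∧
    (k = 3 → ((k : ℤ) - 2) - 2 * ((k : ℤ) - 2) ^ 2 - ((k : ℤ) - 2) ^ 3 + 2 = 0) ∧
    (3 < k → ((k : ℤ) - 2) - 2 * ((k : ℤ) - 2) ^ 2 - ((k : ℤ) - 2) ^ 3 + 2 ≠ 0) := by
  have : NeZero k := ⟨by omega⟩
  have hpoly : ((k : ℤ) - 2) - 2 * ((k : ℤ) - 2) ^ 2 - ((k : ℤ) - 2) ^ 3 + 2 =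
      -(k * (k - 1) * (k - 3)) := by ring
  refine ⟨?_, fun hk₃ => ?_, fun hk₃ => ?_⟩
  · have h := VertexModel.sum_vertexConfigs_compatWeight h₁ h₂ h₃ hl
    simp only [VertexModel.compatWeight, ZMod.card] at h
    rw [hpoly, ← h]
    rfl
  · subst hk₃
    norm_num
  · rw [hpoly, neg_ne_zero]
    exact mul_ne_zero (mul_ne_zero (by omega) (by omega)) (by omega)
end

section
/- Let k ≥ 2 be an integer, let V_k be the (finite) set of quadruples ξ = (ξ₁,ξ₂,ξ₃,ξ₄) of nonzero elements of ZMod k with ξ₁+ξ₂+ξ₃+ξ₄ = 0, and let a be the integer matrix indexed by V_k with a(ξ,ξ') = k-2 if ξ₁ + ξ'₃ = 0 and a(ξ,ξ') = -1 otherwise. Then for every integer i ≥ 1 and all ξ, ξ' ∈ V_k: the (ξ,ξ') entry of the matrix power a^i equals (k-1)^{i-1}·(k-2) if ξ₁ + ξ'₃ = 0, and equals -(k-1)^{i-1} otherwise. -/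
/-!
With `w(0) = k - 2` and `w(z) = -1` for `z ≠ 0` we have `a(ξ, η) = w(ξ₁ + η₃)`, and
`∑_{y ≠ 0} w(s + y) = 0` whenever `s ≠ 0`. For nonzero `x, y` there are `k - 2 + [x + y = 0]`
configurations `η` with `(η₁, η₃) = (x, y)` (the entry `η₂` only has to avoid `0` and `-(x + y)`),
so in `(a²)(ξ, ξ') = ∑_η w(ξ₁ + η₃) w(η₁ + ξ'₃)` the constant part `k - 2` of the count contributes
nothing and the correction `[x + y = 0]` leaves `(k - 1) a(ξ, ξ')`. Hence `a² = (k - 1) a` and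
`aⁱ = (k - 1)^(i-1) a`.
-/

/-- The set of allowed vertex configurations: quadruples of nonzero edge states
in `ZMod k` summing to zero. -/
abbrev VertexConfig (k : ℕ) : Type :=
  {ξ : ZMod k × ZMod k × ZMod k × ZMod k //
    ξ.1 ≠ 0 ∧ ξ.2.1 ≠ 0 ∧ ξ.2.2.1 ≠ 0 ∧ ξ.2.2.2 ≠ 0 ∧
    ξ.1 + ξ.2.1 + ξ.2.2.1 + ξ.2.2.2 = 0}

/-- The normalized compatibility matrix: entry `k - 2` when configurations
`ξ, ξ'` are compatible (i.e. `ξ₁ + ξ'₃ = 0`), and `-1` otherwise. -/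
def compatMat (k : ℕ) : Matrix (VertexConfig k) (VertexConfig k) ℤ :=
  Matrix.of fun ξ ξ' => if ξ.val.1 + ξ'.val.2.2.1 = 0 then (k : ℤ) - 2 else -1

theorem pow_succ_eq_pow_smul_of_mul_self_eq_smul {S A : Type*} [Monoid S] [Monoid A]
    [MulAction S A] [IsScalarTower S A A] {a : A} {c : S} (h : a * a = c • a) (n : ℕ) :
    a ^ (n + 1) = c ^ n • a := by
  induction n with
  | zero => simp
  | succ n ih => rw [pow_succ, ih, smul_mul_assoc, h, smul_smul, ← pow_succ]

open Finset

section

variable {k : ℕ} [NeZero k]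

theorem ZMod.card_compl_zero : (#({0}ᶜ : Finset (ZMod k)) : ℤ) = k - 1 := by
  rw [card_compl, card_singleton, ZMod.card, Nat.cast_sub NeZero.one_le, Nat.cast_one]

theorem ZMod.card_compl_pair_zero {R : Type*} [CommRing R] (c : ZMod k) :
    (#({0, c}ᶜ : Finset (ZMod k)) : R) = k - 2 + if c = 0 then 1 else 0 := by
  have hle : #({0, c} : Finset (ZMod k)) ≤ k := by simpa using card_le_univ {0, c}
  rw [card_compl, ZMod.card, Nat.cast_sub hle]
  by_cases hc : c = 0
  · simp only [hc, insert_eq_of_mem, mem_singleton, card_singleton, Nat.cast_one, if_true]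
    ring
  · rw [card_pair (Ne.symm hc), if_neg hc, Nat.cast_ofNat, add_zero]

theorem VertexConfig.sum_fst_third_eq_sum_card_smul {M : Type*} [AddCommMonoid M]
    (g : ZMod k → ZMod k → M) :
    ∑ η : VertexConfig k, g η.val.1 η.val.2.2.1 =
      ∑ x ∈ {0}ᶜ, ∑ y ∈ {0}ᶜ, #({0, -(x + y)}ᶜ : Finset (ZMod k)) • g x y := by
  rw [← sum_subtype (univ.filter _) (fun _ => mem_filter_univ _)
    (fun p : ZMod k × ZMod k × ZMod k × ZMod k => g p.1 p.2.2.1), sum_filter]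
  simp only [Fintype.sum_prod_type]
  have fourth_determined : ∀ x b y d : ZMod k,
      (x ≠ 0 ∧ b ≠ 0 ∧ y ≠ 0 ∧ d ≠ 0 ∧ x + b + y + d = 0) ↔
        (d = -(x + b + y) ∧ x ∈ ({0}ᶜ : Finset _) ∧ y ∈ ({0}ᶜ : Finset _) ∧
          b ∈ ({0, -(x + y)}ᶜ : Finset _)) := by
    intro x b y d
    simp only [mem_compl, mem_singleton, mem_insert, not_or, ← eq_neg_iff_add_eq_zero]
    grind
  simp only [fourth_determined, ite_and, sum_ite_eq', mem_univ, if_true]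
  rw [sum_congr rfl fun x _ => sum_comm]
  simp only [sum_ite_irrel, sum_ite_mem, univ_inter, sum_const, smul_zero]

theorem VertexConfig.sum_fst_third {R : Type*} [CommRing R] (g : ZMod k → ZMod k → R) :
    ∑ η : VertexConfig k, g η.val.1 η.val.2.2.1 =
      ((k : R) - 2) * ∑ x ∈ {0}ᶜ, ∑ y ∈ {0}ᶜ, g x y + ∑ x ∈ {0}ᶜ, g x (-x) := by
  have hneg : ∀ x y : ZMod k, -(x + y) = 0 ↔ y = -x := fun x y => by
    rw [neg_eq_zero, add_comm, add_eq_zero_iff_eq_neg]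
  simp only [sum_fst_third_eq_sum_card_smul, nsmul_eq_mul, ZMod.card_compl_pair_zero, hneg,
    add_mul, ite_mul, one_mul, zero_mul, sum_add_distrib, mul_sum, sum_ite_eq']
  refine congrArg _ (sum_congr rfl fun x hx => if_pos ?_)
  simpa using hx

end

def compatWeight (k : ℕ) (z : ZMod k) : ℤ := if z = 0 then (k : ℤ) - 2 else -1

theorem compatMat_apply (k : ℕ) (ξ η : VertexConfig k) :
    compatMat k ξ η = compatWeight k (ξ.val.1 + η.val.2.2.1) := rfl

theorem compatWeight_eq (k : ℕ) (z : ZMod k) :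
    compatWeight k z = ((k : ℤ) - 1) * (if z = 0 then 1 else 0) - 1 := by
  unfold compatWeight
  split_ifs <;> ring

section

variable {k : ℕ} [NeZero k]

theorem sum_compatWeight_add_right {t : ZMod k} (ht : t ≠ 0) :
    ∑ x ∈ {0}ᶜ, compatWeight k (x + t) = 0 := by
  simp only [compatWeight_eq, add_eq_zero_iff_eq_neg, sum_sub_distrib, ← mul_sum, sum_ite_eq',
    mem_compl, mem_singleton, neg_eq_zero, ht, not_false_eq_true, if_true, mul_one, sum_const,
    nsmul_eq_mul, ZMod.card_compl_zero, sub_self]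

theorem sum_compatWeight_sub_mul_compatWeight_add {s t : ZMod k} (hs : s ≠ 0) (ht : t ≠ 0) :
    ∑ x ∈ {0}ᶜ, compatWeight k (s - x) * compatWeight k (x + t) =
      ((k : ℤ) - 1) * compatWeight k (s + t) :=
  calc ∑ x ∈ {0}ᶜ, compatWeight k (s - x) * compatWeight k (x + t)
      = ∑ x ∈ {0}ᶜ, (((k : ℤ) - 1) * (if x = s then compatWeight k (x + t) else 0)
          - compatWeight k (x + t)) := sum_congr rfl fun x _ => by
        simp only [compatWeight_eq k (s - x), sub_eq_zero, eq_comm (a := s)]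
        split_ifs <;> ring
    _ = ((k : ℤ) - 1) * compatWeight k (s + t) := by
        rw [sum_sub_distrib, ← mul_sum, sum_ite_eq', if_pos (by simpa using hs),
          sum_compatWeight_add_right ht, sub_zero]

theorem compatMat_mul_self : compatMat k * compatMat k = ((k : ℤ) - 1) • compatMat k := by
  ext ξ ξ'
  have row_sum : ∑ y ∈ {0}ᶜ, compatWeight k (ξ.val.1 + y) = 0 := by
    simpa only [add_comm] using sum_compatWeight_add_right ξ.prop.1
  have expand := VertexConfig.sum_fst_third fun x y =>
    compatWeight k (ξ.val.1 + y) * compatWeight k (x + ξ'.val.2.2.1)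
  rw [Matrix.mul_apply, Matrix.smul_apply, smul_eq_mul]
  simp only [compatMat_apply]
  rw [expand, ← sum_compatWeight_sub_mul_compatWeight_add ξ.prop.1 ξ'.prop.2.2.1]
  simp only [← sum_mul, row_sum, zero_mul, sum_const_zero, mul_zero, zero_add, sub_eq_add_neg]

end

theorem compatMat_pow_entries (k : ℕ) (hk : 2 ≤ k) (i : ℕ) (hi : 1 ≤ i) :
    letI : NeZero k := ⟨by omega⟩
    ∀ ξ ξ' : VertexConfig k,
      ((compatMat k) ^ i) ξ ξ' =
        if ξ.val.1 + ξ'.val.2.2.1 = 0 then ((k : ℤ) - 1) ^ (i - 1) * ((k : ℤ) - 2)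
        else -((k : ℤ) - 1) ^ (i - 1) := by
  have : NeZero k := ⟨by omega⟩
  intro ξ ξ'
  obtain ⟨n, rfl⟩ := Nat.exists_eq_add_of_le' hi
  rw [pow_succ_eq_pow_smul_of_mul_self_eq_smul compatMat_mul_self, Matrix.smul_apply,
    compatMat_apply, compatWeight, Nat.add_sub_cancel, smul_eq_mul]
  split_ifs <;> ring
end

section
/- Let k ≥ 2 and m, n ≥ 1 be integers. The number of proper k-colorings of the m×n grid, i.e. functions c : Fin m × Fin n → ZMod k such that c(i+1,j) ≠ c(i,j) whenever i+1 < m and c(i,j+1) ≠ c(i,j) whenever j+1 < n, equals k times the number of pairs (h, v), where h : Fin (m-1) × Fin n → ZMod k and v : Fin m × Fin (n-1) → ZMod k take only nonzero values and satisfy, for every unit square (i.e. all i with i+1 < m and j with j+1 < n), h(i,j) + v(i+1,j) = v(i,j) + h(i,j+1). Moreover, the map sending a proper coloring c to the pair of difference functions h(i,j) = c(i+1,j) - c(i,j) and v(i,j) = c(i,j+1) - c(i,j) is a surjection onto the set of such pairs, each of whose fibers has exactly k elements. -/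
/-- Proper `k`-colorings of the `m × n` grid: adjacent cells (horizontally or
vertically) receive different values of `ZMod k`. -/
def ProperColoring (k m n : ℕ) : Set (Fin m × Fin n → ZMod k) :=
  {c |
    (∀ (i : ℕ) (j : Fin n) (hi : i + 1 < m),
      c (⟨i + 1, hi⟩, j) ≠ c (⟨i, Nat.lt_of_succ_lt hi⟩, j)) ∧
    (∀ (i : Fin m) (j : ℕ) (hj : j + 1 < n),
      c (i, ⟨j + 1, hj⟩) ≠ c (i, ⟨j, Nat.lt_of_succ_lt hj⟩))}

/-- Admissible edge-state configurations: nowhere-zero horizontal and vertical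
edge states satisfying `h(i,j) + v(i+1,j) = v(i,j) + h(i,j+1)` around every
unit square. -/
def Admissible (k m n : ℕ) :
    Set ((Fin (m - 1) × Fin n → ZMod k) × (Fin m × Fin (n - 1) → ZMod k)) :=
  {hv |
    (∀ e, hv.1 e ≠ 0) ∧ (∀ e, hv.2 e ≠ 0) ∧
    ∀ (i j : ℕ) (hi : i + 1 < m) (hj : j + 1 < n),
      hv.1 (⟨i, by omega⟩, ⟨j, by omega⟩) + hv.2 (⟨i + 1, hi⟩, ⟨j, by omega⟩) =
        hv.2 (⟨i, by omega⟩, ⟨j, by omega⟩) + hv.1 (⟨i, by omega⟩, ⟨j + 1, hj⟩)}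

/-- The map sending a coloring to its pair of difference functions
`h(i,j) = c(i+1,j) - c(i,j)` and `v(i,j) = c(i,j+1) - c(i,j)`. -/
def diffMap (k m n : ℕ) (c : Fin m × Fin n → ZMod k) :
    (Fin (m - 1) × Fin n → ZMod k) × (Fin m × Fin (n - 1) → ZMod k) :=
  (fun e => c (⟨e.1.1 + 1, by have := e.1.isLt; omega⟩, e.2) -
      c (⟨e.1.1, by have := e.1.isLt; omega⟩, e.2),
   fun e => c (e.1, ⟨e.2.1 + 1, by have := e.2.isLt; omega⟩) -
      c (e.1, ⟨e.2.1, by have := e.2.isLt; omega⟩))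

/-!
The differences of any coloring around a unit square telescope, so they satisfy the square rule,
and they vanish nowhere exactly when the coloring is proper. Conversely, a configuration obeying
the square rule is integrated from a value `a` at the corner `(0, 0)`: sum the horizontal states
down column `0`, then the vertical states along each row. Vertical steps are then correct by
construction, and the square rule, by induction on the column, makes horizontal steps correct as
well. Hence `c ↦ (c (0, 0), diffMap c)` is a bijection from proper colorings onto
`ZMod k × Admissible k m n`, and each fiber of `diffMap` is a copy of `ZMod k`.
-/

open Finset

variable {k m n : ℕ}

abbrev EdgeStates (k m n : ℕ) : Type :=
  (Fin (m - 1) × Fin n → ZMod k) × (Fin m × Fin (n - 1) → ZMod k)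

namespace EdgeStates

def IsCurlFree (hv : EdgeStates k m n) : Prop :=
  ∀ (i j : ℕ) (hi : i + 1 < m) (hj : j + 1 < n),
    hv.1 (⟨i, by omega⟩, ⟨j, by omega⟩) + hv.2 (⟨i + 1, hi⟩, ⟨j, by omega⟩) =
      hv.2 (⟨i, by omega⟩, ⟨j, by omega⟩) + hv.1 (⟨i, by omega⟩, ⟨j + 1, hj⟩)

def horiz (hv : EdgeStates k m n) (i j : ℕ) : ZMod k :=
  if h : i < m - 1 ∧ j < n then hv.1 (⟨i, h.1⟩, ⟨j, h.2⟩) else 0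

def vert (hv : EdgeStates k m n) (i j : ℕ) : ZMod k :=
  if h : i < m ∧ j < n - 1 then hv.2 (⟨i, h.1⟩, ⟨j, h.2⟩) else 0

lemma horiz_of_lt (hv : EdgeStates k m n) {i j : ℕ} (hi : i + 1 < m) (hj : j < n) :
    hv.horiz i j = hv.1 (⟨i, by omega⟩, ⟨j, hj⟩) :=
  dif_pos ⟨by omega, hj⟩

lemma vert_of_lt (hv : EdgeStates k m n) {i j : ℕ} (hi : i < m) (hj : j + 1 < n) :
    hv.vert i j = hv.2 (⟨i, hi⟩, ⟨j, by omega⟩) :=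
  dif_pos ⟨hi, by omega⟩

def potential (a : ZMod k) (hv : EdgeStates k m n) (p : Fin m × Fin n) : ZMod k :=
  a + ∑ x ∈ range p.1, hv.horiz x 0 + ∑ y ∈ range p.2, hv.vert p.1 y

lemma potential_zero (a : ZMod k) (hv : EdgeStates k m n) (hm : 0 < m) (hn : 0 < n) :
    hv.potential a (⟨0, hm⟩, ⟨0, hn⟩) = a := by
  simp [potential]

lemma potential_succ_snd (a : ZMod k) (hv : EdgeStates k m n) (i : Fin m) {j : ℕ}
    (hj : j + 1 < n) :
    hv.potential a (i, ⟨j + 1, hj⟩) =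
      hv.potential a (i, ⟨j, by omega⟩) + hv.2 (i, ⟨j, by omega⟩) := by
  simp only [potential, sum_range_succ, hv.vert_of_lt i.2 hj]
  ring

lemma potential_succ_fst_zero (a : ZMod k) (hv : EdgeStates k m n) {i : ℕ} (hi : i + 1 < m)
    (hn : 0 < n) :
    hv.potential a (⟨i + 1, hi⟩, ⟨0, hn⟩) =
      hv.potential a (⟨i, by omega⟩, ⟨0, hn⟩) + hv.1 (⟨i, by omega⟩, ⟨0, hn⟩) := by
  simp only [potential, sum_range_succ, sum_range_zero, hv.horiz_of_lt hi hn]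
  ring

lemma potential_succ_fst (a : ZMod k) {hv : EdgeStates k m n} (hcurl : hv.IsCurlFree)
    {i : ℕ} (hi : i + 1 < m) (j : ℕ) (hj : j < n) :
    hv.potential a (⟨i + 1, hi⟩, ⟨j, hj⟩) =
      hv.potential a (⟨i, by omega⟩, ⟨j, hj⟩) + hv.1 (⟨i, by omega⟩, ⟨j, hj⟩) := by
  induction j with
  | zero => exact hv.potential_succ_fst_zero a hi hj
  | succ j ih =>
    rw [potential_succ_snd, potential_succ_snd, ih (by omega)]
    linear_combination hcurl i j hi hj

end EdgeStates

open EdgeStates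

lemma isCurlFree_diffMap (c : Fin m × Fin n → ZMod k) : IsCurlFree (diffMap k m n c) := by
  intro i j hi hj
  simp only [diffMap]
  ring

lemma mem_properColoring_iff_diffMap_ne_zero (c : Fin m × Fin n → ZMod k) :
    c ∈ ProperColoring k m n ↔
      (∀ e, (diffMap k m n c).1 e ≠ 0) ∧ ∀ e, (diffMap k m n c).2 e ≠ 0 := by
  simp only [diffMap, ne_eq, sub_eq_zero]
  constructor
  · rintro ⟨hcol, hrow⟩
    exact ⟨fun e => hcol e.1 e.2 (by omega), fun e => hrow e.1 e.2 (by omega)⟩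
  · rintro ⟨hcol, hrow⟩
    exact ⟨fun i j hi => hcol (⟨i, by omega⟩, j), fun i j hj => hrow (i, ⟨j, by omega⟩)⟩

lemma diffMap_mem_admissible_iff (c : Fin m × Fin n → ZMod k) :
    diffMap k m n c ∈ Admissible k m n ↔ c ∈ ProperColoring k m n := by
  rw [mem_properColoring_iff_diffMap_ne_zero]
  exact ⟨fun h => ⟨h.1, h.2.1⟩, fun h => ⟨h.1, h.2, isCurlFree_diffMap c⟩⟩

lemma diffMap_potential (a : ZMod k) {hv : EdgeStates k m n} (hcurl : hv.IsCurlFree) :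
    diffMap k m n (potential a hv) = hv := by
  ext ⟨⟨i, hi⟩, ⟨j, hj⟩⟩
  · simp only [diffMap, potential_succ_fst a hcurl (i := i) (by omega), add_sub_cancel_left]
  · simp only [diffMap, potential_succ_snd a hv _ (j := j) (by omega), add_sub_cancel_left]

lemma potential_diffMap (c : Fin m × Fin n → ZMod k) (hm : 0 < m) (hn : 0 < n) :
    potential (c (⟨0, hm⟩, ⟨0, hn⟩)) (diffMap k m n c) = c := by
  have hcol : ∀ (i : ℕ) (hi : i < m),
      potential (c (⟨0, hm⟩, ⟨0, hn⟩)) (diffMap k m n c) (⟨i, hi⟩, ⟨0, hn⟩) =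
        c (⟨i, hi⟩, ⟨0, hn⟩) := by
    intro i hi
    induction i with
    | zero => exact potential_zero _ _ hm hn
    | succ i ih =>
      rw [potential_succ_fst_zero _ _ hi, ih (by omega)]
      simp only [diffMap, add_sub_cancel]
  ext ⟨⟨i, hi⟩, ⟨j, hj⟩⟩
  induction j with
  | zero => exact hcol i hi
  | succ j ih =>
    rw [potential_succ_snd _ _ _ hj, ih (by omega)]
    simp only [diffMap, add_sub_cancel]

lemma potential_mem_properColoring (a : ZMod k) {hv : EdgeStates k m n}
    (hadm : hv ∈ Admissible k m n) : potential a hv ∈ ProperColoring k m n := by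
  rw [← diffMap_mem_admissible_iff, diffMap_potential a hadm.2.2]
  exact hadm

lemma image_diffMap_properColoring :
    diffMap k m n '' ProperColoring k m n = Admissible k m n := by
  ext hv
  refine ⟨?_, fun hadm => ?_⟩
  · rintro ⟨c, hc, rfl⟩
    exact (diffMap_mem_admissible_iff c).2 hc
  · exact ⟨potential 0 hv, potential_mem_properColoring 0 hadm, diffMap_potential 0 hadm.2.2⟩

def properColoringEquiv (hm : 0 < m) (hn : 0 < n) :
    ProperColoring k m n ≃ ZMod k × Admissible k m n where
  toFun c := (c.1 (⟨0, hm⟩, ⟨0, hn⟩), ⟨diffMap k m n c, (diffMap_mem_admissible_iff c.1).2 c.2⟩)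
  invFun p := ⟨potential p.1 p.2.1, potential_mem_properColoring p.1 p.2.2⟩
  left_inv c := Subtype.ext (potential_diffMap c.1 hm hn)
  right_inv p := Prod.ext (potential_zero _ _ hm hn) (Subtype.ext (diffMap_potential _ p.2.2.2.2))

def diffMapFiberEquiv (hm : 0 < m) (hn : 0 < n) {hv : EdgeStates k m n}
    (hadm : hv ∈ Admissible k m n) :
    {c // c ∈ ProperColoring k m n ∧ diffMap k m n c = hv} ≃ ZMod k where
  toFun c := c.1 (⟨0, hm⟩, ⟨0, hn⟩)
  invFun a := ⟨potential a hv, potential_mem_properColoring a hadm, diffMap_potential a hadm.2.2⟩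
  left_inv := by
    rintro ⟨c, -, rfl⟩
    exact Subtype.ext (potential_diffMap c hm hn)
  right_inv a := potential_zero a hv hm hn

theorem grid_colorings_eq_k_mul_vertex_general (k m n : ℕ)
    (hm : 1 ≤ m) (hn : 1 ≤ n) :
    Nat.card (ProperColoring k m n) = k * Nat.card (Admissible k m n) ∧
    diffMap k m n '' ProperColoring k m n = Admissible k m n ∧
    ∀ hv ∈ Admissible k m n,
      Nat.card {c : Fin m × Fin n → ZMod k //
        c ∈ ProperColoring k m n ∧ diffMap k m n c = hv} = k := by
  refine ⟨?_, image_diffMap_properColoring, fun hv hadm => ?_⟩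
  · rw [Nat.card_congr (properColoringEquiv hm hn), Nat.card_prod, Nat.card_zmod]
  · rw [Nat.card_congr (diffMapFiberEquiv hm hn hadm), Nat.card_zmod]

/-- The number of proper `k`-colorings of the `m × n` grid is `k` times the
number of admissible edge-state configurations; indeed the difference map is a
surjection from proper colorings onto admissible edge-state configurations all
of whose fibers have exactly `k` elements. -/
theorem grid_colorings_eq_k_mul_vertex (k m n : ℕ) (hk : 2 ≤ k)
    (hm : 1 ≤ m) (hn : 1 ≤ n) :
    Nat.card (ProperColoring k m n) = k * Nat.card (Admissible k m n) ∧
    diffMap k m n '' ProperColoring k m n = Admissible k m n ∧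
    ∀ hv ∈ Admissible k m n,
      Nat.card {c : Fin m × Fin n → ZMod k //
        c ∈ ProperColoring k m n ∧ diffMap k m n c = hv} = k :=
  grid_colorings_eq_k_mul_vertex_general k m n hm hn
end
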